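/- arXiv:2212.07844 — 3 statements merged into one kernel-verified Lean document; each statement's English description precedes it below -/
import Mathlib

section
/- Let E be a real inner product space, let α, β > 0 with γ ∈ (0, 2α/(α+β)²), let B : E → E be monotone and β-Lipschitz, and let R : E → E be Lipschitz with constant 1/(1 + γα). Then the forward–backward map H : E → E defined by H(x) = R(x − γ • B x) is Lipschitz with constant √(1 + γ²β²)/(1 + γα), and this constant is strictly less than 1; in particular H is a strict contraction. -/
open RealInnerProductSpace

/-- If `B` is monotone and `β`-Lipschitz, `γ ∈ (0, 2α/(α+β)²)`, and `R` is Lipschitz with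
constant `1/(1+γα)`, then the forward–backward map `H x = R (x - γ • B x)` is Lipschitz
with constant `√(1+γ²β²)/(1+γα) < 1`, i.e. `H` is a strict contraction. -/
theorem forward_backward_strict_contraction_of_strongly_monotone_A
    {E : Type*} [NormedAddCommGroup E] [InnerProductSpace ℝ E]
    (B R : E → E) (α β γ : ℝ) (hα : 0 < α) (hβ : 0 < β)
    (hγ : 0 < γ) (hγ' : γ < 2 * α / (α + β) ^ 2)
    (hmono : ∀ x y : E, 0 ≤ ⟪B x - B y, x - y⟫)
    (hlip : ∀ x y : E, ‖B x - B y‖ ≤ β * ‖x - y‖)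
    (hR : ∀ x y : E, ‖R x - R y‖ ≤ (1 / (1 + γ * α)) * ‖x - y‖) :
    (∀ x y : E,
        ‖R (x - γ • B x) - R (y - γ • B y)‖
          ≤ (Real.sqrt (1 + γ ^ 2 * β ^ 2) / (1 + γ * α)) * ‖x - y‖) ∧
      Real.sqrt (1 + γ ^ 2 * β ^ 2) / (1 + γ * α) < 1 := by
  have hden : (0 : ℝ) < 1 + γ * α := by positivity
  constructor
  · intro x y
    set a := x - y with ha
    set b := B x - B y with hb
    have hkey : x - γ • B x - (y - γ • B y) = a - γ • b := by
      simp [ha, hb, smul_sub]; abel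
    have hsq : ‖a - γ • b‖ ^ 2 ≤ (1 + γ ^ 2 * β ^ 2) * ‖a‖ ^ 2 := by
      have hexp : ‖a - γ • b‖ ^ 2 = ‖a‖ ^ 2 - 2 * (γ * ⟪a, b⟫) + γ ^ 2 * ‖b‖ ^ 2 := by
        rw [norm_sub_sq_real, real_inner_smul_right, norm_smul]
        simp [mul_pow, abs_of_nonneg hγ.le]
      have h1 : 0 ≤ ⟪a, b⟫ := by rw [real_inner_comm]; exact hmono x y
      have h2 : ‖b‖ ^ 2 ≤ β ^ 2 * ‖a‖ ^ 2 := by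
        have := hlip x y
        calc ‖b‖ ^ 2 ≤ (β * ‖a‖) ^ 2 := by
              apply pow_le_pow_left₀ (norm_nonneg _) this
          _ = β ^ 2 * ‖a‖ ^ 2 := by ring
      nlinarith [sq_nonneg γ]
    have hnorm : ‖a - γ • b‖ ≤ Real.sqrt (1 + γ ^ 2 * β ^ 2) * ‖a‖ := by
      have := Real.sqrt_le_sqrt hsq
      rwa [Real.sqrt_sq (norm_nonneg _), Real.sqrt_mul (by positivity),
        Real.sqrt_sq (norm_nonneg _)] at this
    calc ‖R (x - γ • B x) - R (y - γ • B y)‖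
        ≤ (1 / (1 + γ * α)) * ‖x - γ • B x - (y - γ • B y)‖ := hR _ _
      _ = (1 / (1 + γ * α)) * ‖a - γ • b‖ := by rw [hkey]
      _ ≤ (1 / (1 + γ * α)) * (Real.sqrt (1 + γ ^ 2 * β ^ 2) * ‖a‖) := by
          apply mul_le_mul_of_nonneg_left hnorm (by positivity)
      _ = (Real.sqrt (1 + γ ^ 2 * β ^ 2) / (1 + γ * α)) * ‖x - y‖ := by
          rw [ha]; ring
  · rw [div_lt_one hden]
    have h1 : γ * (α + β) ^ 2 < 2 * α := by
      have := (lt_div_iff₀ (by positivity : (0:ℝ) < (α + β) ^ 2)).mp hγ'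
      linarith
    have h2 : 1 + γ ^ 2 * β ^ 2 < (1 + γ * α) ^ 2 := by nlinarith [mul_lt_mul_of_pos_left h1 hγ, mul_pos (mul_pos hγ hγ) (mul_pos hα hβ), sq_nonneg (γ*α)]
    calc Real.sqrt (1 + γ ^ 2 * β ^ 2) < Real.sqrt ((1 + γ * α) ^ 2) := by
          exact Real.sqrt_lt_sqrt (by positivity) h2
      _ = 1 + γ * α := Real.sqrt_sq hden.le
end

section
/- Let E be a real inner product space and let h : E → ℝ be a convex differentiable function with h(0) = 0 whose gradient ∇h is 1-Lipschitz. Then for every x ∈ E, setting x⁺ = x − ∇h(x), one has 2·h(x⁺) + ‖x⁺‖² ≤ ‖x‖². -/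
/-!
Write `g = ∇h x`. Convexity at `x`, tested against `0`, gives `h x ≤ ⟪g, x⟫`, and the descent
lemma gives `h x⁺ ≤ h x - ‖g‖² / 2`; hence `2 h x⁺ ≤ 2 ⟪g, x⟫ - ‖g‖² = ‖x‖² - ‖x⁺‖²`.
-/

open Set

section

variable {E : Type*} [NormedAddCommGroup E] [InnerProductSpace ℝ E] [CompleteSpace E]
  {f : E → ℝ}

theorem HasGradientAt.hasDerivAt_comp_add_smul {f' x v : E} {t : ℝ}
    (hf : HasGradientAt f f' (x + t • v)) :
    HasDerivAt (fun s : ℝ => f (x + s • v)) (inner ℝ f' v) t := by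
  have hline : HasDerivAt (fun s : ℝ => x + s • v) v t := by
    simpa using ((hasDerivAt_id t).smul_const v).const_add x
  simpa [Function.comp_def] using hf.hasFDerivAt.comp_hasDerivAt t hline

theorem ConvexOn.add_inner_gradient_le {s : Set E} (hconv : ConvexOn ℝ s f) {x y : E}
    (hx : x ∈ s) (hy : y ∈ s) (hf : DifferentiableAt ℝ f x) :
    f x + inner ℝ (gradient f x) (y - x) ≤ f y := by
  have hline : ConvexOn ℝ (AffineMap.lineMap x y ⁻¹' s) (fun t : ℝ => f (x + t • (y - x))) := by
    simpa [Function.comp_def, AffineMap.lineMap_apply, add_comm] using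
      hconv.comp_affineMap (AffineMap.lineMap x y)
  have hderiv :
      HasDerivAt (fun t : ℝ => f (x + t • (y - x))) (inner ℝ (gradient f x) (y - x)) 0 :=
    HasGradientAt.hasDerivAt_comp_add_smul (by simpa using hf.hasGradientAt)
  have hslope := hline.le_slope_of_hasDerivAt (x := 0) (y := 1) (by simpa using hx)
    (by simpa using hy) one_pos hderiv
  simp only [slope_def_field, sub_zero, div_one, zero_smul, add_zero, one_smul,
    add_sub_cancel] at hslope
  linarith

/-- The descent lemma of smooth optimization. -/
theorem le_add_inner_gradient_add_sq_of_lipschitzWith {L : NNReal} (hf : Differentiable ℝ f)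
    (hL : LipschitzWith L (gradient f)) (x y : E) :
    f y ≤ f x + inner ℝ (gradient f x) (y - x) + L / 2 * ‖y - x‖ ^ 2 := by
  set v := y - x
  have hderiv (t : ℝ) :
      HasDerivAt (fun s : ℝ => f (x + s • v)) (inner ℝ (gradient f (x + t • v)) v) t :=
    (hf _).hasGradientAt.hasDerivAt_comp_add_smul
  have hquadratic (t : ℝ) :
      HasDerivAt (fun s : ℝ => f x + s * inner ℝ (gradient f x) v + L / 2 * s ^ 2 * ‖v‖ ^ 2)
        (inner ℝ (gradient f x) v + L * t * ‖v‖ ^ 2) t := by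
    refine ((((hasDerivAt_id' t).mul_const _).const_add (f x)).add
      (((hasDerivAt_pow 2 t).const_mul ((L : ℝ) / 2)).mul_const (‖v‖ ^ 2))).congr_deriv ?_
    ring
  have hslope (t : ℝ) (ht : 0 ≤ t) :
      inner ℝ (gradient f (x + t • v)) v ≤ inner ℝ (gradient f x) v + L * t * ‖v‖ ^ 2 := by
    have hgrad : ‖gradient f (x + t • v) - gradient f x‖ ≤ L * (t * ‖v‖) := by
      simpa [dist_eq_norm, norm_smul, abs_of_nonneg ht] using hL.dist_le_mul (x + t • v) x
    have := real_inner_le_norm (gradient f (x + t • v) - gradient f x) v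
    rw [inner_sub_left] at this
    nlinarith [norm_nonneg v]
  have hcompare := image_le_of_deriv_right_le_deriv_boundary (a := 0) (b := 1)
    (fun t _ => (hderiv t).continuousAt.continuousWithinAt)
    (fun t _ => (hderiv t).hasDerivWithinAt) (by simp)
    (fun t _ => (hquadratic t).continuousAt.continuousWithinAt)
    (fun t _ => (hquadratic t).hasDerivWithinAt) (fun t ht => hslope t ht.1)
    (right_mem_Icc.2 zero_le_one)
  simpa [v] using hcompare

end

/-- If `h : E → ℝ` is convex and differentiable with `h 0 = 0` and `1`-Lipschitz gradient,
then the unit-step gradient descent point `x⁺ = x - ∇h x` satisfies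
`2 h(x⁺) + ‖x⁺‖² ≤ ‖x‖²`. -/
theorem gradient_descent_step_inequality
    {E : Type*} [NormedAddCommGroup E] [InnerProductSpace ℝ E] [CompleteSpace E]
    (h : E → ℝ) (hconv : ConvexOn ℝ Set.univ h) (hdiff : Differentiable ℝ h)
    (h0 : h 0 = 0)
    (hlip : ∀ x y : E, ‖gradient h x - gradient h y‖ ≤ ‖x - y‖) :
    ∀ x : E, 2 * h (x - gradient h x) + ‖x - gradient h x‖ ^ 2 ≤ ‖x‖ ^ 2 := by
  intro x
  have hlipschitz : LipschitzWith 1 (gradient h) :=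
    LipschitzWith.of_dist_le_mul fun x y => by simpa [dist_eq_norm] using hlip x y
  have hconv_at := hconv.add_inner_gradient_le (mem_univ x) (mem_univ 0) (hdiff x)
  have hdescent :=
    le_add_inner_gradient_add_sq_of_lipschitzWith hdiff hlipschitz x (x - gradient h x)
  simp only [zero_sub, inner_neg_right, h0, sub_sub_cancel_left, norm_neg,
    real_inner_self_eq_norm_sq, NNReal.coe_one] at hconv_at hdescent
  rw [norm_sub_sq_real, real_inner_comm]
  linarith
end

section
/- Let E and F be finite-dimensional real inner product spaces, let α, β > 0 and γ ∈ (0, 2α/(α+β)²), let K : E →L[ℝ] F be a continuous linear map with operator norm ‖K‖ ≤ β and adjoint K†, and let R₁ : E → E and R₂ : F → F each be Lipschitz with constant 1/(1 + γα). Equip E × F with the product inner product ⟪(x,y),(x',y')⟫ = ⟪x,x'⟫ + ⟪y,y'⟫. Then the primal–dual forward–backward map H : E × F → E × F defined by H(x, y) = (R₁(x − γ • K† y), R₂(y + γ • K x)) is Lipschitz with constant √(1 + γ²β²)/(1 + γα), and this constant is strictly less than 1; in particular H is a strict contraction. -/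
/-- The primal–dual forward–backward map
`H (x, y) = (R₁ (x - γ • K† y), R₂ (y + γ • K x))` on `E × F` (with the product inner
product and associated norm) is Lipschitz with constant `√(1+γ²β²)/(1+γα) < 1` whenever
`‖K‖ ≤ β`, `γ ∈ (0, 2α/(α+β)²)` and `R₁, R₂` are `1/(1+γα)`-Lipschitz; in particular `H`
is a strict contraction. -/
theorem primal_dual_forward_backward_strict_contraction
    {E F : Type*} [NormedAddCommGroup E] [InnerProductSpace ℝ E]
    [NormedAddCommGroup F] [InnerProductSpace ℝ F]
    [FiniteDimensional ℝ E] [FiniteDimensional ℝ F]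
    (α β γ : ℝ) (hα : 0 < α) (hβ : 0 < β)
    (hγ : 0 < γ) (hγ' : γ < 2 * α / (α + β) ^ 2)
    (K : E →L[ℝ] F) (hK : ‖K‖ ≤ β)
    (R₁ : E → E) (R₂ : F → F)
    (hR₁ : ∀ x x' : E, ‖R₁ x - R₁ x'‖ ≤ (1 / (1 + γ * α)) * ‖x - x'‖)
    (hR₂ : ∀ y y' : F, ‖R₂ y - R₂ y'‖ ≤ (1 / (1 + γ * α)) * ‖y - y'‖) :
    (∀ x x' : E, ∀ y y' : F,
        Real.sqrt
            (‖R₁ (x - γ • (ContinuousLinearMap.adjoint K) y)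
                - R₁ (x' - γ • (ContinuousLinearMap.adjoint K) y')‖ ^ 2
              + ‖R₂ (y + γ • K x) - R₂ (y' + γ • K x')‖ ^ 2)
          ≤ (Real.sqrt (1 + γ ^ 2 * β ^ 2) / (1 + γ * α))
              * Real.sqrt (‖x - x'‖ ^ 2 + ‖y - y'‖ ^ 2)) ∧
      Real.sqrt (1 + γ ^ 2 * β ^ 2) / (1 + γ * α) < 1 := by
  have hden : (0:ℝ) < 1 + γ * α := by positivity
  have hnum : (0:ℝ) ≤ 1 + γ ^ 2 * β ^ 2 := by positivity
  have hKadj : ‖ContinuousLinearMap.adjoint K‖ ≤ β := by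
    rw [LinearIsometryEquiv.norm_map ContinuousLinearMap.adjoint K]; exact hK
  constructor
  · intro x x' y y'
    set u := x - x' with hu
    set v := y - y' with hv
    have hKu : ‖K u‖ ≤ β * ‖u‖ :=
      (K.le_opNorm u).trans (mul_le_mul_of_nonneg_right hK (norm_nonneg u))
    have hKv : ‖ContinuousLinearMap.adjoint K v‖ ≤ β * ‖v‖ :=
      ((ContinuousLinearMap.adjoint K).le_opNorm v).trans
        (mul_le_mul_of_nonneg_right hKadj (norm_nonneg v))
    -- key identity
    have harg1 : (x - γ • ContinuousLinearMap.adjoint K y)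
        - (x' - γ • ContinuousLinearMap.adjoint K y')
        = u - γ • ContinuousLinearMap.adjoint K v := by
      simp [hu, hv, map_sub, smul_sub]; abel
    have harg2 : (y + γ • K x) - (y' + γ • K x') = v + γ • K u := by
      simp [hu, hv, map_sub, smul_sub]; abel
    have hS : ‖u - γ • ContinuousLinearMap.adjoint K v‖ ^ 2 + ‖v + γ • K u‖ ^ 2
        = ‖u‖ ^ 2 + ‖v‖ ^ 2
          + γ ^ 2 * (‖ContinuousLinearMap.adjoint K v‖ ^ 2 + ‖K u‖ ^ 2) := by
      rw [norm_sub_sq_real, norm_add_sq_real, real_inner_smul_right,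
        real_inner_smul_right, ContinuousLinearMap.adjoint_inner_right,
        real_inner_comm v (K u), norm_smul, norm_smul]
      simp [mul_pow, abs_of_pos hγ]
      ring
    have hSle : ‖u - γ • ContinuousLinearMap.adjoint K v‖ ^ 2 + ‖v + γ • K u‖ ^ 2
        ≤ (1 + γ ^ 2 * β ^ 2) * (‖u‖ ^ 2 + ‖v‖ ^ 2) := by
      rw [hS]
      have h1 : ‖K u‖ ^ 2 ≤ (β * ‖u‖) ^ 2 := by
        apply pow_le_pow_left₀ (norm_nonneg _) hKu
      have h2 : ‖ContinuousLinearMap.adjoint K v‖ ^ 2 ≤ (β * ‖v‖) ^ 2 := by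
        apply pow_le_pow_left₀ (norm_nonneg _) hKv
      nlinarith [sq_nonneg γ]
    have hA := hR₁ (x - γ • ContinuousLinearMap.adjoint K y)
      (x' - γ • ContinuousLinearMap.adjoint K y')
    have hB := hR₂ (y + γ • K x) (y' + γ • K x')
    rw [harg1] at hA
    rw [harg2] at hB
    have hc : (0:ℝ) ≤ 1 / (1 + γ * α) := by positivity
    have hA2 : ‖R₁ (x - γ • ContinuousLinearMap.adjoint K y)
        - R₁ (x' - γ • ContinuousLinearMap.adjoint K y')‖ ^ 2
        ≤ (1 / (1 + γ * α)) ^ 2 * ‖u - γ • ContinuousLinearMap.adjoint K v‖ ^ 2 := by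
      rw [← mul_pow]; exact pow_le_pow_left₀ (norm_nonneg _) hA 2
    have hB2 : ‖R₂ (y + γ • K x) - R₂ (y' + γ • K x')‖ ^ 2
        ≤ (1 / (1 + γ * α)) ^ 2 * ‖v + γ • K u‖ ^ 2 := by
      rw [← mul_pow]; exact pow_le_pow_left₀ (norm_nonneg _) hB 2
    have hRHS : (0:ℝ) ≤ Real.sqrt (1 + γ ^ 2 * β ^ 2) / (1 + γ * α)
        * Real.sqrt (‖u‖ ^ 2 + ‖v‖ ^ 2) := by positivity
    have key : ‖R₁ (x - γ • ContinuousLinearMap.adjoint K y)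
        - R₁ (x' - γ • ContinuousLinearMap.adjoint K y')‖ ^ 2
        + ‖R₂ (y + γ • K x) - R₂ (y' + γ • K x')‖ ^ 2
        ≤ (Real.sqrt (1 + γ ^ 2 * β ^ 2) / (1 + γ * α)
            * Real.sqrt (‖u‖ ^ 2 + ‖v‖ ^ 2)) ^ 2 := by
      have hsum : (0:ℝ) ≤ ‖u‖ ^ 2 + ‖v‖ ^ 2 := by positivity
      have : (Real.sqrt (1 + γ ^ 2 * β ^ 2) / (1 + γ * α)
            * Real.sqrt (‖u‖ ^ 2 + ‖v‖ ^ 2)) ^ 2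
          = (1 / (1 + γ * α)) ^ 2 * ((1 + γ ^ 2 * β ^ 2) * (‖u‖ ^ 2 + ‖v‖ ^ 2)) := by
        rw [mul_pow, div_pow, Real.sq_sqrt hnum, Real.sq_sqrt hsum]
        field_simp
      rw [this]
      calc _ ≤ (1 / (1 + γ * α)) ^ 2 * ‖u - γ • ContinuousLinearMap.adjoint K v‖ ^ 2
            + (1 / (1 + γ * α)) ^ 2 * ‖v + γ • K u‖ ^ 2 := add_le_add hA2 hB2
        _ = (1 / (1 + γ * α)) ^ 2
            * (‖u - γ • ContinuousLinearMap.adjoint K v‖ ^ 2 + ‖v + γ • K u‖ ^ 2) := by ring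
        _ ≤ _ := by
            apply mul_le_mul_of_nonneg_left hSle (by positivity)
    calc Real.sqrt _ ≤ Real.sqrt ((Real.sqrt (1 + γ ^ 2 * β ^ 2) / (1 + γ * α)
            * Real.sqrt (‖u‖ ^ 2 + ‖v‖ ^ 2)) ^ 2) := Real.sqrt_le_sqrt key
      _ = _ := Real.sqrt_sq hRHS
  · rw [div_lt_one hden]
    have h1 : Real.sqrt (1 + γ ^ 2 * β ^ 2) < Real.sqrt ((1 + γ * α) ^ 2) := by
      apply Real.sqrt_lt_sqrt hnum
      have hden2 : (0:ℝ) < (α + β) ^ 2 := by positivity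
      have hkey : γ * (α + β) ^ 2 < 2 * α := (lt_div_iff₀ hden2).mp hγ'
      nlinarith [mul_lt_mul_of_pos_left hkey hγ, mul_pos (mul_pos hγ hγ) (mul_pos hα hα),
        mul_pos (mul_pos hγ hγ) (mul_pos hα hβ)]
    calc Real.sqrt (1 + γ ^ 2 * β ^ 2) < Real.sqrt ((1 + γ * α) ^ 2) := h1
      _ = 1 + γ * α := Real.sqrt_sq hden.le
end
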